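/- Let S, N, E, W, A, B, C, D ∈ ℝ² with S ≠ N, and set the centroids K = (S + N + W)/3, L = (N + S + E)/3, M = (N + E + A)/3, P = (W + N + B)/3, Q = (S + W + C)/3, R = (E + S + D)/3, the midpoint O = (S + N)/2, and the radii of gyration ρ_K and ρ_L of (S,N,W) and (N,S,E). Let n_SN be the unit vector orthogonal to N − S with ⟨n_SN, E − S⟩ > 0. Let η, α, β, γ, δ be real numbers such that: (i) η·(L − K) + α·(M − L) + β·(P − K) + γ·(Q − K) + δ·(R − L) = ‖N − S‖·n_SN; and (ii) (ρ_L² + ‖L − S‖²)·η + (1/6)·⟨A − S, (E−S)+(A−S)+(N−S)⟩·α + (1/6)·⟨D − N, (D−S)+(E−S)+(N−S)⟩·δ = (ρ_K² + ‖K − S‖²)·η − (1/6)·⟨B − S, (N−S)+(B−S)+(W−S)⟩·β − (1/6)·⟨C − N, (N−S)+(W−S)+(C−S)⟩·γ. Then α·⟨M − L, A − W⟩ + β·⟨P − K, B − E⟩ + γ·⟨Q − K, C − E⟩ + δ·⟨R − L, D − W⟩ = −3·‖N − S‖·⟨n_SN, (L − O) + (K − O)⟩. (Theorem 2, necessary condition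 (3.6) for a dual Raviart–Thomas basis.) -/

import Mathlib

/-!
Read (i) and (ii) as facts about the signed combination of triangles
η (L - K) + α (M - L) + β (P - K) + γ (Q - K) + δ (R - L): (i) gives its first moment
‖N - S‖ n_SN, and (ii) says that its second moment about S vanishes, because flipping the edge xy
of a triangle from apex w to apex z changes the second moment about p by
(1/6) ⟪z - w, (x - p) + (y - p) + (z - p) + (w - p)⟫.
By the parallel-axis theorem, moving the base point to Y = (S + N + E + W)/4 changes the second
moment of the combination by -2 ‖N - S‖ ⟪n_SN, Y - S⟫. About Y the flip K → L costs nothing, and the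
flip L → M costs exactly ⟪M - L, A - W⟫ / 2 (likewise for P, Q, R), so the left-hand side equals
-4 ‖N - S‖ ⟪n_SN, Y - S⟫, which is the right-hand side since n_SN ⊥ N - S.
-/

open scoped RealInnerProductSpace

section
variable {V : Type*} [NormedAddCommGroup V] [InnerProductSpace ℝ V]

/-- The mean of `‖ξ - p‖²` over the solid triangle `xyz`: squared radius of gyration plus the
parallel-axis term. -/
noncomputable def secondMoment (x y z p : V) : ℝ :=
  (1 / 36) * (‖x - y‖ ^ 2 + ‖y - z‖ ^ 2 + ‖z - x‖ ^ 2) + ‖(1 / 3 : ℝ) • (x + y + z) - p‖ ^ 2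

theorem secondMoment_comm (x y z p : V) : secondMoment x y z p = secondMoment y x z p := by
  unfold secondMoment
  rw [norm_sub_rev x y, norm_sub_rev y z, norm_sub_rev z x, add_comm x y]
  ring

theorem secondMoment_sub_secondMoment (x y z w p : V) :
    secondMoment x y z p - secondMoment x y w p =
      (1 / 6) * ⟪z - w, (x - p) + (y - p) + (z - p) + (w - p)⟫ := by
  simp only [secondMoment, ← real_inner_self_eq_norm_sq, inner_add_left, inner_add_right,
    inner_sub_left, inner_sub_right, inner_smul_left, inner_smul_right, real_inner_comm,
    RCLike.conj_to_real]
  ring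
end

theorem stmt14_general (S N E W A B C D : EuclideanSpace ℝ (Fin 2))
    (K L M P Q R O : EuclideanSpace ℝ (Fin 2))
    (hK : K = (1 / 3 : ℝ) • (S + N + W))
    (hL : L = (1 / 3 : ℝ) • (N + S + E))
    (hM : M = (1 / 3 : ℝ) • (N + E + A))
    (hP : P = (1 / 3 : ℝ) • (W + N + B))
    (hQ : Q = (1 / 3 : ℝ) • (S + W + C))
    (hR : R = (1 / 3 : ℝ) • (E + S + D))
    (hO : O = (1 / 2 : ℝ) • (S + N))
    (ρK ρL : ℝ)
    (hρK : ρK = Real.sqrt ((1 / 36) * (‖S - N‖ ^ 2 + ‖N - W‖ ^ 2 + ‖W - S‖ ^ 2)))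
    (hρL : ρL = Real.sqrt ((1 / 36) * (‖N - S‖ ^ 2 + ‖S - E‖ ^ 2 + ‖E - N‖ ^ 2)))
    (nSN : EuclideanSpace ℝ (Fin 2))
    (hnSN0 : ⟪nSN, N - S⟫ = 0)
    (η α β γ δ : ℝ)
    (hi : η • (L - K) + α • (M - L) + β • (P - K) + γ • (Q - K) + δ • (R - L) =
      ‖N - S‖ • nSN)
    (hii : (ρL ^ 2 + ‖L - S‖ ^ 2) * η
        + (1 / 6) * ⟪A - S, (E - S) + (A - S) + (N - S)⟫ * α
        + (1 / 6) * ⟪D - N, (D - S) + (E - S) + (N - S)⟫ * δ =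
      (ρK ^ 2 + ‖K - S‖ ^ 2) * η
        - (1 / 6) * ⟪B - S, (N - S) + (B - S) + (W - S)⟫ * β
        - (1 / 6) * ⟪C - N, (N - S) + (W - S) + (C - S)⟫ * γ) :
    α * ⟪M - L, A - W⟫ + β * ⟪P - K, B - E⟫ + γ * ⟪Q - K, C - E⟫ +
        δ * ⟪R - L, D - W⟫ =
      -3 * ‖N - S‖ * ⟪nSN, (L - O) + (K - O)⟫ := by
  have hμK : ρK ^ 2 + ‖K - S‖ ^ 2 = secondMoment S N W S := by
    rw [hρK, Real.sq_sqrt (by positivity), hK]; rfl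
  have hμL : ρL ^ 2 + ‖L - S‖ ^ 2 = secondMoment N S E S := by
    rw [hρL, Real.sq_sqrt (by positivity), hL]; rfl
  have hflip : secondMoment N S E S - secondMoment S N W S =
      (1 / 6) * ⟪E - W, (S - S) + (N - S) + (E - S) + (W - S)⟫ := by
    rw [secondMoment_comm, secondMoment_sub_secondMoment]
  -- `N + E + W - 3 • S = 4 • (Y - S)` is the parallel-axis shift to the vertex average `Y`.
  have hfirst := congrArg (⟪·, N + E + W - (3 : ℝ) • S⟫) hi
  rw [hμK, hμL] at hii
  subst hK hL hM hP hQ hR hO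
  simp only [inner_add_left, inner_add_right, inner_sub_left, inner_sub_right, inner_smul_left,
    inner_smul_right, real_inner_comm, RCLike.conj_to_real] at hflip hfirst hii hnSN0 ⊢
  linear_combination 2 * hii - hfirst - 2 * η * hflip - 2 * ‖N - S‖ * hnSN0

/-- Theorem 2, necessary condition (3.6) for a dual Raviart–Thomas basis. -/
theorem stmt14 (S N E W A B C D : EuclideanSpace ℝ (Fin 2)) (hSN : S ≠ N)
    (K L M P Q R O : EuclideanSpace ℝ (Fin 2))
    (hK : K = (1 / 3 : ℝ) • (S + N + W))
    (hL : L = (1 / 3 : ℝ) • (N + S + E))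
    (hM : M = (1 / 3 : ℝ) • (N + E + A))
    (hP : P = (1 / 3 : ℝ) • (W + N + B))
    (hQ : Q = (1 / 3 : ℝ) • (S + W + C))
    (hR : R = (1 / 3 : ℝ) • (E + S + D))
    (hO : O = (1 / 2 : ℝ) • (S + N))
    (ρK ρL : ℝ)
    (hρK : ρK = Real.sqrt ((1 / 36) * (‖S - N‖ ^ 2 + ‖N - W‖ ^ 2 + ‖W - S‖ ^ 2)))
    (hρL : ρL = Real.sqrt ((1 / 36) * (‖N - S‖ ^ 2 + ‖S - E‖ ^ 2 + ‖E - N‖ ^ 2)))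
    (nSN : EuclideanSpace ℝ (Fin 2))
    (hnSN : ‖nSN‖ = 1) (hnSN0 : ⟪nSN, N - S⟫ = 0) (hnSNE : 0 < ⟪nSN, E - S⟫)
    (η α β γ δ : ℝ)
    (hi : η • (L - K) + α • (M - L) + β • (P - K) + γ • (Q - K) + δ • (R - L) =
      ‖N - S‖ • nSN)
    (hii : (ρL ^ 2 + ‖L - S‖ ^ 2) * η
        + (1 / 6) * ⟪A - S, (E - S) + (A - S) + (N - S)⟫ * α
        + (1 / 6) * ⟪D - N, (D - S) + (E - S) + (N - S)⟫ * δ =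
      (ρK ^ 2 + ‖K - S‖ ^ 2) * η
        - (1 / 6) * ⟪B - S, (N - S) + (B - S) + (W - S)⟫ * β
        - (1 / 6) * ⟪C - N, (N - S) + (W - S) + (C - S)⟫ * γ) :
    α * ⟪M - L, A - W⟫ + β * ⟪P - K, B - E⟫ + γ * ⟪Q - K, C - E⟫ +
        δ * ⟪R - L, D - W⟫ =
      -3 * ‖N - S‖ * ⟪nSN, (L - O) + (K - O)⟫ :=
  stmt14_general S N E W A B C D K L M P Q R O hK hL hM hP hQ hR hO ρK ρL hρK hρL nSN hnSN0 η α β γ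
    δ hi hii
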